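/- Let R be a commutative ring, a an ideal, and M an R-module of bounded large a-torsion, i.e., a^n · Γ̄_a(M) = 0 for some n ∈ ℕ. Then Γ_a(M) = Γ̄_a(M) and M is large a-fair: Ass_R(M/Γ̄_a(M)) = Ass_R(M) \ var(a). -/

import Mathlib

/-!
The bound says a single power `a ^ n` kills all of `Γ̄_a(M)`, so `Γ̄_a(M) ⊆ Γ_a(M)`. Since `Γ̄_a` is a radical, `M / Γ̄_a(M)` has no large `a`-torsion and
hence no associated prime containing `a`. For a prime `p ⊉ a`, pick `s ∈ a ^ n \ p`: `s` kills
`Γ̄_a(M)`, so `M` and `M / Γ̄_a(M)` agree after inverting `s`, and the radicals of annihilators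
that equal `p` correspond (`x ↦ x̄` one way, `x̄ ↦ s • x` the other).
-/

open Submodule

universe u v

variable {R : Type u} [CommRing R]

/-- The small `a`-torsion submodule `Γ_a(M) = {x | ∃ n, a^n • x = 0}`. -/
def smallTorsion (a : Ideal R) (M : Type v) [AddCommGroup M] [Module R M] :
    Submodule R M where
  carrier := {x | ∃ n : ℕ, ∀ r ∈ a ^ n, r • x = 0}
  zero_mem' := ⟨0, fun r _ => smul_zero r⟩
  add_mem' := by
    rintro x y ⟨n, hn⟩ ⟨m, hm⟩
    refine ⟨n + m, fun r hr => ?_⟩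
    have h1 : r ∈ a ^ n := Ideal.pow_le_pow_right (Nat.le_add_right n m) hr
    have h2 : r ∈ a ^ m := Ideal.pow_le_pow_right (Nat.le_add_left m n) hr
    rw [smul_add, hn r h1, hm r h2, add_zero]
  smul_mem' := by
    rintro c x ⟨n, hn⟩
    exact ⟨n, fun r hr => by rw [smul_comm, hn r hr, smul_zero]⟩

/-- The large `a`-torsion submodule `Γ̄_a(M) = {x | a ⊆ √(0 : x)}`. -/
def largeTorsion (a : Ideal R) (M : Type v) [AddCommGroup M] [Module R M] :
    Submodule R M where
  carrier := {x | ∀ r ∈ a, ∃ n : ℕ, r ^ n • x = 0}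
  zero_mem' := fun r _ => ⟨0, smul_zero _⟩
  add_mem' := by
    rintro x y hx hy r hr
    obtain ⟨n, hn⟩ := hx r hr
    obtain ⟨m, hm⟩ := hy r hr
    refine ⟨n + m, ?_⟩
    have hx' : r ^ (n + m) • x = 0 := by
      rw [pow_add, mul_comm, mul_smul, hn, smul_zero]
    have hy' : r ^ (n + m) • y = 0 := by
      rw [pow_add, mul_smul, hm, smul_zero]
    rw [smul_add, hx', hy', add_zero]
  smul_mem' := by
    rintro c x hx r hr
    obtain ⟨n, hn⟩ := hx r hr
    exact ⟨n, by rw [smul_comm, hn, smul_zero]⟩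

/-- The set of weakly associated primes of `M`: primes minimal over the
annihilator `(0 :_R x)` of some `x ∈ M`. -/
def weakAssPrimes (R : Type u) [CommRing R] (M : Type v) [AddCommGroup M]
    [Module R M] : Set (Ideal R) :=
  {p | ∃ x : M, p ∈ Ideal.minimalPrimes (LinearMap.ker (LinearMap.toSpanSingleton R M x))}

/-- The variety of an ideal: the set of primes containing it. -/
def varI (a : Ideal R) : Set (Ideal R) := {p | p.IsPrime ∧ a ≤ p}

theorem Ideal.radical_eq_of_le_of_mul_mem {p I J : Ideal R} [p.IsPrime] (hI : p = I.radical)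
    (hIJ : I ≤ J) {s : R} (hs : s ∉ p) (hJ : ∀ t ∈ J, s * t ∈ I) : p = J.radical := by
  refine le_antisymm (hI ▸ Ideal.radical_mono hIJ) fun t ⟨k, htk⟩ => ?_
  have hst : s * t ^ k ∈ p := hI ▸ Ideal.le_radical (hJ _ htk)
  exact Ideal.IsPrime.mem_of_pow_mem ‹_› k ((Ideal.IsPrime.mem_or_mem ‹_› hst).resolve_left hs)

section AssociatedPrimes

variable {M : Type*} [AddCommGroup M] [Module R M] {N : Submodule R M} {p : Ideal R}

theorem isAssociatedPrime_quotient_of_not_annihilator_le (hp : IsAssociatedPrime p M)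
    (hN : ¬ N.annihilator ≤ p) : IsAssociatedPrime p (M ⧸ N) := by
  obtain ⟨hprime, x, hx⟩ := hp
  obtain ⟨s, hsN, hsp⟩ := SetLike.not_le_iff_exists.mp hN
  refine ⟨hprime, N.mkQ x, Ideal.radical_eq_of_le_of_mul_mem hx (fun t ht => ?_) hsp
    fun t ht => ?_⟩
  · rw [mem_colon_singleton, mem_bot] at ht ⊢
    rw [← map_smul, ht, map_zero]
  · rw [mem_colon_singleton, mem_bot, ← map_smul, mkQ_apply, Quotient.mk_eq_zero] at ht
    rw [mem_colon_singleton, mem_bot, mul_smul]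
    exact mem_annihilator.mp hsN _ ht

theorem isAssociatedPrime_of_quotient_of_not_annihilator_le (hp : IsAssociatedPrime p (M ⧸ N))
    (hN : ¬ N.annihilator ≤ p) : IsAssociatedPrime p M := by
  obtain ⟨hprime, x, hx⟩ := hp
  obtain ⟨x, rfl⟩ := N.mkQ_surjective x
  obtain ⟨s, hsN, hsp⟩ := SetLike.not_le_iff_exists.mp hN
  refine ⟨hprime, s • x, Ideal.radical_eq_of_le_of_mul_mem hx (fun t ht => ?_) hsp
    fun t ht => ?_⟩
  · rw [mem_colon_singleton, mem_bot, ← map_smul, mkQ_apply, Quotient.mk_eq_zero] at ht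
    rw [mem_colon_singleton, mem_bot, smul_comm]
    exact mem_annihilator.mp hsN _ ht
  · rw [mem_colon_singleton, mem_bot] at ht
    rw [mem_colon_singleton, mem_bot, ← map_smul, mul_smul, smul_comm s t x, ht, map_zero]

theorem isAssociatedPrime_quotient_iff_of_not_annihilator_le (hN : ¬ N.annihilator ≤ p) :
    IsAssociatedPrime p (M ⧸ N) ↔ IsAssociatedPrime p M :=
  ⟨(isAssociatedPrime_of_quotient_of_not_annihilator_le · hN),
    (isAssociatedPrime_quotient_of_not_annihilator_le · hN)⟩

end AssociatedPrimes

section Torsion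

variable {M : Type*} [AddCommGroup M] [Module R M] {a : Ideal R}

theorem mem_largeTorsion_iff_le_radical_colon {x : M} :
    x ∈ largeTorsion a M ↔ a ≤ ((⊥ : Submodule R M).colon {x}).radical := by
  simp only [SetLike.le_def, Ideal.mem_radical_iff, mem_colon_singleton, mem_bot]
  rfl

theorem smallTorsion_le_largeTorsion : smallTorsion a M ≤ largeTorsion a M :=
  fun _ ⟨m, hm⟩ _ hr => ⟨m, hm _ (Ideal.pow_mem_pow hr m)⟩

theorem largeTorsion_le_smallTorsion_of_pow_smul_eq_bot {n : ℕ}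
    (hn : a ^ n • largeTorsion a M = ⊥) : largeTorsion a M ≤ smallTorsion a M :=
  fun x hx => ⟨n, fun _ hr => mem_annihilator.mp (le_annihilator_iff.mpr hn hr) x hx⟩

theorem largeTorsion_quotient_largeTorsion_eq_bot :
    largeTorsion a (M ⧸ largeTorsion a M) = ⊥ := by
  refine eq_bot_iff.mpr fun x hx => ?_
  obtain ⟨x, rfl⟩ := Submodule.Quotient.mk_surjective _ x
  refine (Quotient.mk_eq_zero _).mpr fun r hr => ?_
  obtain ⟨k, hk⟩ := hx r hr
  rw [← Quotient.mk_smul, Quotient.mk_eq_zero] at hk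
  obtain ⟨j, hj⟩ := hk r hr
  exact ⟨j + k, by rw [pow_add, mul_smul, hj]⟩

theorem not_le_of_mem_associatedPrimes_of_largeTorsion_eq_bot (h : largeTorsion a M = ⊥)
    {p : Ideal R} (hp : p ∈ associatedPrimes R M) : ¬ a ≤ p := by
  obtain ⟨hprime, x, rfl⟩ := hp
  intro hap
  rw [← mem_largeTorsion_iff_le_radical_colon, h, mem_bot] at hap
  subst hap
  exact hprime.ne_top (by simp)

end Torsion

/-- A module of bounded large `a`-torsion satisfies `Γ_a(M) = Γ̄_a(M)` and is
large `a`-fair. -/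
theorem stmt14 (a : Ideal R) (M : Type v) [AddCommGroup M] [Module R M]
    (hbd : ∃ n : ℕ, a ^ n • largeTorsion a M = ⊥) :
    smallTorsion a M = largeTorsion a M ∧
    associatedPrimes R (M ⧸ largeTorsion a M) =
      associatedPrimes R M \ varI a := by
  obtain ⟨n, hn⟩ := hbd
  have hann {p : Ideal R} [p.IsPrime] (hap : ¬ a ≤ p) : ¬ (largeTorsion a M).annihilator ≤ p :=
    fun h => hap (Ideal.IsPrime.le_of_pow_le ((le_annihilator_iff.mpr hn).trans h))
  refine ⟨smallTorsion_le_largeTorsion.antisymm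
    (largeTorsion_le_smallTorsion_of_pow_smul_eq_bot hn), Set.ext fun p => ⟨fun hp => ?_, ?_⟩⟩
  · have : p.IsPrime := hp.isPrime
    have hap := not_le_of_mem_associatedPrimes_of_largeTorsion_eq_bot
      largeTorsion_quotient_largeTorsion_eq_bot hp
    exact ⟨(isAssociatedPrime_quotient_iff_of_not_annihilator_le (hann hap)).mp hp,
      fun h => hap h.2⟩
  · rintro ⟨hp, hpa⟩
    have : p.IsPrime := hp.isPrime
    exact (isAssociatedPrime_quotient_iff_of_not_annihilator_le
      (hann fun h => hpa ⟨this, h⟩)).mpr hp
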